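/- arXiv:1708.02570 — 10 statements merged into one kernel-verified Lean document; each statement's English description precedes it below -/
import Mathlib

section
/- For all m n : ℕ, define for each monotone map f : Fin m → Fin n the map f^∨ : Fin (n+1) → Fin (m+1) by (f^∨ j : ℕ) = Fintype.card {i : Fin m // (f i : ℕ) < (j : ℕ)}. Then: (i) f^∨ is monotone and endpoint-preserving (f^∨ 0 = 0 and f^∨ (Fin.last n) = Fin.last m); (ii) the assignment f ↦ f^∨ is a bijection from monotone maps Fin m → Fin n onto endpoint-preserving monotone maps Fin (n+1) → Fin (m+1); (iii) (id : Fin n → Fin n)^∨ = id; (iv) for monotone f₁ : Fin m → Fin n and f₂ : Fin n → Fin p, (f₂ ∘ f₁)^∨ = f₁^∨ ∘ f₂^∨. (Joyal duality: the opposite of the generic part of the topologist's simplex category is isomorphic to the algebraist's simplex category.) -/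
/-! For monotone `f`, the dual `f^∨` is characterised by the Galois-type adjunction
`i < f^∨ j ↔ f i < j` (with `i, f i` embedded by `castSucc`), because `{i | f i < j}` is a lower
set of `Fin m`, i.e. an initial segment whose length is its cardinality. An element of `Fin (m+1)`
is determined by the elements of `Fin m` below it, so every claim reduces to this adjunction. The
inverse of `f ↦ f^∨` is again a dual: `h` corresponds to `i ↦ (h ∘ succ)^∨ (i + 1)`. -/

def fDual {m n : ℕ} (f : Fin m → Fin n) (j : Fin (n + 1)) : Fin (m + 1) :=
  ⟨Fintype.card {i : Fin m // (f i : ℕ) < (j : ℕ)}, by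
    have h := Fintype.card_subtype_le (fun i : Fin m => (f i : ℕ) < (j : ℕ))
    simp only [Fintype.card_fin] at h
    omega⟩

lemma Fin.lt_card_subtype_iff_of_isLowerSet {m : ℕ} {P : Fin m → Prop} [DecidablePred P]
    (hP : IsLowerSet {i | P i}) (i : Fin m) :
    (i : ℕ) < Fintype.card {x // P x} ↔ P i := by
  rw [Fintype.card_subtype]
  constructor
  · intro hlt
    by_contra hPi
    have hsub : Finset.univ.filter (fun x => P x) ⊆ Finset.Iio i := fun x hx => by
      simp only [Finset.mem_filter, Finset.mem_univ, true_and] at hx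
      exact Finset.mem_Iio.2 (lt_of_not_ge fun hix => hPi (hP hix hx))
    have := Finset.card_le_card hsub
    rw [Fin.card_Iio] at this
    omega
  · intro hPi
    have hsub : Finset.Iic i ⊆ Finset.univ.filter (fun x => P x) := fun x hx =>
      Finset.mem_filter.2 ⟨Finset.mem_univ x, hP (Finset.mem_Iic.1 hx) hPi⟩
    have := Finset.card_le_card hsub
    rw [Fin.card_Iic] at this
    omega

lemma Fin.le_of_forall_castSucc_lt_imp {m : ℕ} {c c' : Fin (m + 1)}
    (h : ∀ i : Fin m, i.castSucc < c → i.castSucc < c') : c ≤ c' :=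
  le_of_forall_lt fun x => Fin.lastCases (fun hlast => absurd hlast (Fin.le_last c).not_gt) h x

lemma Fin.eq_of_forall_castSucc_lt_iff {m : ℕ} {c c' : Fin (m + 1)}
    (h : ∀ i : Fin m, i.castSucc < c ↔ i.castSucc < c') : c = c' :=
  (Fin.le_of_forall_castSucc_lt_imp fun i => (h i).1).antisymm
    (Fin.le_of_forall_castSucc_lt_imp fun i => (h i).2)

section fDual

variable {m n p : ℕ}

lemma castSucc_lt_fDual_iff {f : Fin m → Fin n} (hf : Monotone f) (j : Fin (n + 1)) (i : Fin m) :
    i.castSucc < fDual f j ↔ (f i).castSucc < j := by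
  simp only [Fin.lt_def, Fin.val_castSucc]
  exact Fin.lt_card_subtype_iff_of_isLowerSet (P := fun i => (f i : ℕ) < j)
    (fun _ _ hle hb => lt_of_le_of_lt (Fin.le_iff_val_le_val.1 (hf hle)) hb) i

lemma monotone_fDual {f : Fin m → Fin n} (hf : Monotone f) : Monotone (fDual f) :=
  fun _ _ hjj' => Fin.le_of_forall_castSucc_lt_imp fun i => by
    simpa only [castSucc_lt_fDual_iff hf] using (·.trans_le hjj')

lemma fDual_zero {f : Fin m → Fin n} (hf : Monotone f) : fDual f 0 = 0 :=
  Fin.eq_of_forall_castSucc_lt_iff fun i => by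
    simp only [castSucc_lt_fDual_iff hf, Fin.not_lt_zero]

lemma fDual_last {f : Fin m → Fin n} (hf : Monotone f) : fDual f (Fin.last n) = Fin.last m :=
  Fin.eq_of_forall_castSucc_lt_iff fun i => by
    simp only [castSucc_lt_fDual_iff hf, Fin.castSucc_lt_last]

lemma fDual_id : fDual (id : Fin n → Fin n) = id :=
  funext fun j => Fin.eq_of_forall_castSucc_lt_iff fun i => by
    rw [castSucc_lt_fDual_iff monotone_id, id, id]

lemma fDual_comp {f₁ : Fin m → Fin n} {f₂ : Fin n → Fin p} (hf₁ : Monotone f₁)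
    (hf₂ : Monotone f₂) : fDual (f₂ ∘ f₁) = fDual f₁ ∘ fDual f₂ :=
  funext fun j => Fin.eq_of_forall_castSucc_lt_iff fun i => by
    rw [castSucc_lt_fDual_iff (hf₂.comp hf₁), Function.comp_apply, Function.comp_apply,
      castSucc_lt_fDual_iff hf₁, castSucc_lt_fDual_iff hf₂]

lemma eq_of_fDual_eq {f g : Fin m → Fin n} (hf : Monotone f) (hg : Monotone g)
    (hfg : fDual f = fDual g) : f = g :=
  funext fun i => Fin.castSucc_injective _ <| eq_of_forall_gt_iff fun j => by
    rw [← castSucc_lt_fDual_iff hf, ← castSucc_lt_fDual_iff hg, hfg]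

lemma fDual_comp_succ_lt_iff {h : Fin (n + 1) → Fin (m + 1)} (hh : Monotone h) (h0 : h 0 = 0)
    (i : Fin m) (j : Fin (n + 1)) :
    fDual (h ∘ Fin.succ) i.castSucc.succ < j ↔ i.castSucc < h j := by
  induction j using Fin.cases with
  | zero => simp only [h0, Fin.not_lt_zero]
  | succ j =>
    rw [← Fin.le_castSucc_iff, ← not_lt,
      castSucc_lt_fDual_iff (hh.comp (Fin.strictMono_succ.monotone)), Fin.castSucc_lt_succ_iff,
      not_le, Function.comp_apply]

lemma exists_monotone_fDual_eq {h : Fin (n + 1) → Fin (m + 1)} (hh : Monotone h) (h0 : h 0 = 0)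
    (hlast : h (Fin.last n) = Fin.last m) : ∃ f : Fin m → Fin n, Monotone f ∧ fDual f = h := by
  have hne (i : Fin m) : fDual (h ∘ Fin.succ) i.castSucc.succ ≠ Fin.last n :=
    ((fDual_comp_succ_lt_iff hh h0 i _).2 (hlast ▸ Fin.castSucc_lt_last i)).ne
  let f (i : Fin m) : Fin n := (fDual (h ∘ Fin.succ) i.castSucc.succ).castPred (hne i)
  have hf : Monotone f := fun i i' hii' => Fin.castPred_le_castPred_iff.2
    (monotone_fDual (hh.comp Fin.strictMono_succ.monotone) (by simpa using hii'))
  refine ⟨f, hf, funext fun j => Fin.eq_of_forall_castSucc_lt_iff fun i => ?_⟩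
  rw [castSucc_lt_fDual_iff hf, Fin.castSucc_castPred, fDual_comp_succ_lt_iff hh h0]

end fDual

/-- Joyal duality: the opposite of the generic (endpoint-preserving) part of the
topologist's simplex category is isomorphic to the algebraist's simplex category. -/
theorem joyal_duality (m n p : ℕ) :
    (∀ f : Fin m → Fin n, Monotone f →
      Monotone (fDual f) ∧ fDual f 0 = 0 ∧ fDual f (Fin.last n) = Fin.last m) ∧
    (∀ f g : Fin m → Fin n, Monotone f → Monotone g → fDual f = fDual g → f = g) ∧
    (∀ h : Fin (n + 1) → Fin (m + 1), Monotone h → h 0 = 0 → h (Fin.last n) = Fin.last m →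
      ∃ f : Fin m → Fin n, Monotone f ∧ fDual f = h) ∧
    (fDual (id : Fin n → Fin n) = id) ∧
    (∀ (f₁ : Fin m → Fin n) (f₂ : Fin n → Fin p), Monotone f₁ → Monotone f₂ →
      fDual (f₂ ∘ f₁) = fDual f₁ ∘ fDual f₂) :=
  ⟨fun _ hf => ⟨monotone_fDual hf, fDual_zero hf, fDual_last hf⟩,
    fun _ _ => eq_of_fDual_eq, fun _ => exists_monotone_fDual_eq, fDual_id,
    fun _ _ => fDual_comp⟩
end

section
/- Under the duality f ↦ f^∨, where for monotone f : Fin m → Fin n one sets (f^∨ j : ℕ) = Fintype.card {i : Fin m // (f i : ℕ) < (j : ℕ)}, the generators correspond as follows: (i) for n : ℕ and k : Fin (n+1), the coface d^k : Fin n → Fin (n+1) satisfies (d^k)^∨ = s^k : Fin (n+2) → Fin (n+1), the codegeneracy with the same pivot value; (ii) for n : ℕ and k : Fin n, the codegeneracy s^k : Fin (n+1) → Fin n satisfies (s^k)^∨ = d^{k+1} : Fin (n+1) → Fin (n+2), the coface whose pivot has value (k : ℕ) + 1. -/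
/-- The coface map `d^k : Fin m → Fin (m+1)` with pivot of value `k`:
`x ↦ x` if `x < k`, and `x ↦ x + 1` otherwise. -/
def coface {m : ℕ} (k : ℕ) (x : Fin m) : Fin (m + 1) :=
  if (x : ℕ) < k then ⟨(x : ℕ), by have := x.isLt; omega⟩
  else ⟨(x : ℕ) + 1, by have := x.isLt; omega⟩

/-- The codegeneracy map `s^k : Fin (m+2) → Fin (m+1)` with pivot `k : Fin (m+1)`:
`y ↦ y` if `y ≤ k`, and `y ↦ y - 1` otherwise. -/
def codeg {m : ℕ} (k : Fin (m + 1)) (y : Fin (m + 2)) : Fin (m + 1) :=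
  if h : (y : ℕ) ≤ (k : ℕ) then ⟨(y : ℕ), by have := k.isLt; omega⟩
  else ⟨(y : ℕ) - 1, by have := y.isLt; omega⟩

/- The dual is characterised by the adjunction `f i < j ↔ i < f^∨ j`, so each identity
reduces to a comparison of the explicit formulas for cofaces and codegeneracies. -/

lemma fDual_eq_of_lt_iff {m n : ℕ} {f : Fin m → Fin n} {g : Fin (n + 1) → Fin (m + 1)}
    (h : ∀ (i : Fin m) (j : Fin (n + 1)), (f i : ℕ) < j ↔ (i : ℕ) < g j) :
    fDual f = g := by
  funext j
  ext
  calc Fintype.card {i : Fin m // (f i : ℕ) < j}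
      = Fintype.card {i : Fin m // (i : ℕ) < g j} :=
        Fintype.card_congr (Equiv.subtypeEquivRight (h · j))
    _ = g j := by
        rw [← Fintype.card_congr (Fin.castLEquiv (Nat.lt_succ_iff.mp (g j).isLt)),
          Fintype.card_fin]

lemma coface_lt_iff_lt_codeg {n : ℕ} (k : Fin (n + 1)) (i : Fin n) (j : Fin (n + 2)) :
    (coface (k : ℕ) i : ℕ) < j ↔ (i : ℕ) < codeg k j := by
  unfold coface codeg
  split_ifs <;> simp only <;> omega

lemma codeg_lt_iff_lt_coface {n : ℕ} (k : Fin (n + 1)) (i j : Fin (n + 2)) :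
    (codeg k i : ℕ) < j ↔ (i : ℕ) < coface ((k : ℕ) + 1) j := by
  unfold coface codeg
  split_ifs <;> simp only <;> omega

/-- Under Joyal duality, cofaces correspond to codegeneracies (with the same
pivot value), and codegeneracies correspond to inner cofaces (whose pivot has
value one more). -/
theorem joyal_duality_on_generators (n : ℕ) :
    (∀ k : Fin (n + 1), fDual (coface (k : ℕ) : Fin n → Fin (n + 1)) = codeg k) ∧
    (∀ k : Fin (n + 1), fDual (codeg k : Fin (n + 2) → Fin (n + 1)) =
      (coface ((k : ℕ) + 1) : Fin (n + 2) → Fin (n + 3))) := by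
  exact ⟨fun k => fDual_eq_of_lt_iff (coface_lt_iff_lt_codeg k),
    fun k => fDual_eq_of_lt_iff (codeg_lt_iff_lt_coface k)⟩
end

section
/- Fix n : ℕ and k : Fin (n+1). Write d₁ : Fin n → Fin (n+1) for the coface with pivot k, d₂ : Fin (n+1) → Fin (n+2) for the coface whose pivot has value (k : ℕ), and s : Fin (n+2) → Fin (n+1) for the codegeneracy with pivot k. Then: (i) s ∘ d₂ ∘ d₁ = d₁; (ii) for every c : ℕ and all monotone maps u : Fin c → Fin (n+2) and v : Fin c → Fin n with s ∘ u = d₁ ∘ v, one has u = d₂ ∘ d₁ ∘ v. Consequently the square with top row d₂ ∘ d₁ : Fin n → Fin (n+2), bottom row d₁ : Fin n → Fin (n+1), left leg the identity of Fin n, and right leg s, is a pullback in the category of finite ordinals and monotone maps. -/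
lemma coface_eq_succAbove {m : ℕ} (p : Fin (m + 1)) :
    (coface (p : ℕ) : Fin m → Fin (m + 1)) = p.succAbove := by
  ext x
  simp only [coface, Fin.succAbove, Fin.lt_def, Fin.val_castSucc]
  split_ifs <;> simp

lemma codeg_eq_predAbove {m : ℕ} (p : Fin (m + 1)) : codeg p = p.predAbove := by
  ext y
  simp only [codeg, Fin.predAbove, Fin.lt_def, Fin.val_castSucc]
  split_ifs <;> simp <;> omega

lemma Fin.eq_succAbove_succAbove_of_predAbove_eq_succAbove {n : ℕ} {p : Fin (n + 1)}
    {y : Fin (n + 2)} {x : Fin n} (h : p.predAbove y = p.succAbove x) :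
    y = (castSucc p).succAbove (p.succAbove x) := by
  have hy : y ≠ castSucc p := by
    rintro rfl
    exact p.succAbove_ne x (by rw [← h, predAbove_castSucc_self])
  obtain ⟨z, rfl⟩ := exists_succAbove_eq hy
  rw [predAbove_succAbove] at h
  rw [h]

/-- The square with top `d₂ ∘ d₁`, bottom `d₁`, left leg the identity and right
leg the codegeneracy `s` is a pullback in the category of finite ordinals and
monotone maps (cf. Lemma `somepbk1`). -/
theorem codeg_coface_pullback (n : ℕ) (k : Fin (n + 1)) :
    -- d₁ := coface (k : ℕ) : Fin n → Fin (n+1)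
    -- d₂ := coface (k : ℕ) : Fin (n+1) → Fin (n+2)
    -- s  := codeg k : Fin (n+2) → Fin (n+1)
    ((codeg k) ∘ (coface (k : ℕ) : Fin (n + 1) → Fin (n + 2)) ∘
        (coface (k : ℕ) : Fin n → Fin (n + 1)) = (coface (k : ℕ) : Fin n → Fin (n + 1))) ∧
    (∀ (c : ℕ) (u : Fin c → Fin (n + 2)) (v : Fin c → Fin n), Monotone u → Monotone v →
      (codeg k) ∘ u = (coface (k : ℕ)) ∘ v →
      u = (coface (k : ℕ) : Fin (n + 1) → Fin (n + 2)) ∘ (coface (k : ℕ)) ∘ v) ∧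
    (∀ (c : ℕ) (u : Fin c → Fin (n + 2)) (v : Fin c → Fin n), Monotone u → Monotone v →
      (codeg k) ∘ u = (coface (k : ℕ)) ∘ v →
      ∃! w : Fin c → Fin n, Monotone w ∧
        ((coface (k : ℕ) : Fin (n + 1) → Fin (n + 2)) ∘ (coface (k : ℕ))) ∘ w = u ∧
        id ∘ w = v) := by
  have hd₂ : (coface (k : ℕ) : Fin (n + 1) → Fin (n + 2)) = k.castSucc.succAbove :=
    coface_eq_succAbove k.castSucc
  rw [hd₂, coface_eq_succAbove, codeg_eq_predAbove]
  have lift : ∀ (c : ℕ) (u : Fin c → Fin (n + 2)) (v : Fin c → Fin n),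
      k.predAbove ∘ u = k.succAbove ∘ v → u = k.castSucc.succAbove ∘ k.succAbove ∘ v :=
    fun _ _ _ h ↦ funext fun a ↦ Fin.eq_succAbove_succAbove_of_predAbove_eq_succAbove (congrFun h a)
  refine ⟨funext fun x ↦ Fin.predAbove_succAbove k _, fun c u v _ _ h ↦ lift c u v h, ?_⟩
  intro c u v _ hv h
  refine ⟨v, ⟨hv, (lift c u v h).symm, rfl⟩, fun w ⟨_, _, hw⟩ ↦ hw⟩
end

section
/- Fix n : ℕ with n ≥ 1 and a natural number k with 0 < k < n. Write d^k_{(m)} for the coface Fin m → Fin (m+1) with pivot of value k, and write d_⊤ : Fin m → Fin (m+1) for x ↦ (x : ℕ) and d_⊥ : Fin m → Fin (m+1) for x ↦ (x : ℕ) + 1. Then: (i) d^k_{(n+1)} ∘ d_⊤ = d_⊤ ∘ d^k_{(n)}, and for every c : ℕ and monotone u, v : Fin c → Fin (n+1) with d^k_{(n+1)} ∘ u = d_⊤ ∘ v there exists a unique monotone w : Fin c → Fin n with d_⊤ ∘ w = u and d^k_{(n)} ∘ w = v; (ii) d^{k+1}_{(n+1)} ∘ d_⊥ = d_⊥ ∘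 d^k_{(n)}, and for every c : ℕ and monotone u, v : Fin c → Fin (n+1) with d^{k+1}_{(n+1)} ∘ u = d_⊥ ∘ v there exists a unique monotone w : Fin c → Fin n with d_⊥ ∘ w = u and d^k_{(n)} ∘ w = v. (The squares of an inner coface against each outer coface are pullbacks in the category of finite ordinals.) -/
/-- The top outer coface `d_⊤ : Fin m → Fin (m+1)`, `x ↦ x`. -/
def dTop {m : ℕ} (x : Fin m) : Fin (m + 1) :=
  ⟨(x : ℕ), by have := x.isLt; omega⟩

/-- The bottom outer coface `d_⊥ : Fin m → Fin (m+1)`, `x ↦ x + 1`. -/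
def dBot {m : ℕ} (x : Fin m) : Fin (m + 1) :=
  ⟨(x : ℕ) + 1, by have := x.isLt; omega⟩

lemma coface_val_cases {m : ℕ} (k : ℕ) (x : Fin m) :
    (x : ℕ) < k ∧ (coface k x : ℕ) = x ∨ k ≤ (x : ℕ) ∧ (coface k x : ℕ) = x + 1 := by
  by_cases hx : (x : ℕ) < k
  · exact .inl ⟨hx, by simp [coface, hx]⟩
  · exact .inr ⟨not_lt.mp hx, by simp [coface, hx]⟩

@[simp]
lemma dTop_val {m : ℕ} (x : Fin m) : (dTop x : ℕ) = x := rfl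

@[simp]
lemma dBot_val {m : ℕ} (x : Fin m) : (dBot x : ℕ) = x + 1 := rfl

lemma dTop_strictMono {m : ℕ} : StrictMono (dTop : Fin m → Fin (m + 1)) :=
  fun _ _ h => h

lemma dBot_strictMono {m : ℕ} : StrictMono (dBot : Fin m → Fin (m + 1)) :=
  fun _ _ h => Nat.succ_lt_succ h

lemma coface_comp_dTop {m : ℕ} (k : ℕ) :
    (coface k : Fin (m + 1) → Fin (m + 2)) ∘ dTop = dTop ∘ (coface k : Fin m → Fin (m + 1)) := by
  funext x
  ext
  have := coface_val_cases k (dTop x)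
  have := coface_val_cases k x
  simp only [Function.comp_apply, dTop_val] at *
  omega

lemma coface_succ_comp_dBot {m : ℕ} (k : ℕ) :
    (coface (k + 1) : Fin (m + 1) → Fin (m + 2)) ∘ dBot =
      dBot ∘ (coface k : Fin m → Fin (m + 1)) := by
  funext x
  ext
  have := coface_val_cases (k + 1) (dBot x)
  have := coface_val_cases k x
  simp only [Function.comp_apply, dBot_val] at *
  omega

lemma exists_dTop_eq_and_coface_eq {m k : ℕ} (hk : k ≤ m) {a b : Fin (m + 1)}
    (h : coface k a = dTop b) : ∃ x : Fin m, dTop x = a ∧ coface k x = b := by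
  have hab := congrArg Fin.val h
  have ha := coface_val_cases k a
  have hb := b.isLt
  rw [dTop_val] at hab
  let x : Fin m := ⟨a, by omega⟩
  have hx : (x : ℕ) = a := rfl
  have := coface_val_cases k x
  exact ⟨x, rfl, Fin.ext (by omega)⟩

lemma exists_dBot_eq_and_coface_eq {m k : ℕ} {a b : Fin (m + 1)}
    (h : coface (k + 1) a = dBot b) : ∃ x : Fin m, dBot x = a ∧ coface k x = b := by
  have hab := congrArg Fin.val h
  have ha := coface_val_cases (k + 1) a
  have ha' := a.isLt
  rw [dBot_val] at hab
  let x : Fin m := ⟨a - 1, by omega⟩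
  have hx : (x : ℕ) = a - 1 := rfl
  have := coface_val_cases k x
  exact ⟨x, Fin.ext (by rw [dBot_val]; omega), Fin.ext (by omega)⟩

lemma existsUnique_monotone_lift {P A B C ι : Type*} [LinearOrder P] [Preorder A] [Preorder ι]
    {p : P → A} {q : P → B} {f : A → C} {g : B → C} (hp : StrictMono p)
    (hlift : ∀ a b, f a = g b → ∃ x, p x = a ∧ q x = b)
    {u : ι → A} {v : ι → B} (hu : Monotone u) (h : f ∘ u = g ∘ v) :
    ∃! w : ι → P, Monotone w ∧ p ∘ w = u ∧ q ∘ w = v := by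
  choose w hwp hwq using fun i => hlift (u i) (v i) (congrFun h i)
  refine ⟨w, ⟨fun i j hij => ?_, funext hwp, funext hwq⟩, fun w' ⟨_, hw'p, _⟩ => ?_⟩
  · rw [← hp.le_iff_le, hwp, hwp]
    exact hu hij
  · funext i
    exact hp.injective ((congrFun hw'p i).trans (hwp i).symm)

theorem inner_coface_outer_coface_pullbacks_general (n k : ℕ) (hkn : k < n) :
    ((coface k : Fin (n + 1) → Fin (n + 2)) ∘ dTop =
      dTop ∘ (coface k : Fin n → Fin (n + 1))) ∧
    (∀ (c : ℕ) (u v : Fin c → Fin (n + 1)), Monotone u → Monotone v →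
      (coface k : Fin (n + 1) → Fin (n + 2)) ∘ u = dTop ∘ v →
      ∃! w : Fin c → Fin n, Monotone w ∧ dTop ∘ w = u ∧ (coface k) ∘ w = v) ∧
    ((coface (k + 1) : Fin (n + 1) → Fin (n + 2)) ∘ dBot =
      dBot ∘ (coface k : Fin n → Fin (n + 1))) ∧
    (∀ (c : ℕ) (u v : Fin c → Fin (n + 1)), Monotone u → Monotone v →
      (coface (k + 1) : Fin (n + 1) → Fin (n + 2)) ∘ u = dBot ∘ v →
      ∃! w : Fin c → Fin n, Monotone w ∧ dBot ∘ w = u ∧ (coface k) ∘ w = v) :=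
  ⟨coface_comp_dTop k,
    fun _ _ _ hu _ h =>
      existsUnique_monotone_lift dTop_strictMono
        (fun _ _ => exists_dTop_eq_and_coface_eq hkn.le) hu h,
    coface_succ_comp_dBot k,
    fun _ _ _ hu _ h =>
      existsUnique_monotone_lift dBot_strictMono
        (fun _ _ => exists_dBot_eq_and_coface_eq) hu h⟩

/-- The squares of an inner coface against each outer coface are pullbacks in
the category of finite ordinals and monotone maps. -/
theorem inner_coface_outer_coface_pullbacks (n k : ℕ) (hn : 1 ≤ n)
    (hk0 : 0 < k) (hkn : k < n) :
    ((coface k : Fin (n + 1) → Fin (n + 2)) ∘ dTop =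
      dTop ∘ (coface k : Fin n → Fin (n + 1))) ∧
    (∀ (c : ℕ) (u v : Fin c → Fin (n + 1)), Monotone u → Monotone v →
      (coface k : Fin (n + 1) → Fin (n + 2)) ∘ u = dTop ∘ v →
      ∃! w : Fin c → Fin n, Monotone w ∧ dTop ∘ w = u ∧ (coface k) ∘ w = v) ∧
    ((coface (k + 1) : Fin (n + 1) → Fin (n + 2)) ∘ dBot =
      dBot ∘ (coface k : Fin n → Fin (n + 1))) ∧
    (∀ (c : ℕ) (u v : Fin c → Fin (n + 1)), Monotone u → Monotone v →
      (coface (k + 1) : Fin (n + 1) → Fin (n + 2)) ∘ u = dBot ∘ v →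
      ∃! w : Fin c → Fin n, Monotone w ∧ dBot ∘ w = u ∧ (coface k) ∘ w = v) :=
  inner_coface_outer_coface_pullbacks_general n k hkn
end

section
/- Let f : Fin n → Fin k be monotone and a b : ℕ. Let g = id_a + f + id_b : Fin (a+n+b) → Fin (a+k+b), and let j : Fin n → Fin (a+n+b) and i : Fin k → Fin (a+k+b) be the middle inclusions x ↦ a + x. Then g ∘ j = i ∘ f, and for every c : ℕ and all monotone maps u : Fin c → Fin (a+n+b) and v : Fin c → Fin k with g ∘ u = i ∘ v, there exists a unique monotone w : Fin c → Fin n with j ∘ w = u and f ∘ w = v. (Identity-extension squares in the category of finite ordinals are pullbacks.) -/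
/-- The block sum `id_a + f + id_b : Fin (a+n+b) → Fin (a+k+b)` of a monotone
map `f : Fin n → Fin k` with identities: it sends `x` to `x` if `x < a`, to
`a + f (x - a)` if `a ≤ x < a + n`, and to `x - n + k` if `a + n ≤ x`. -/
def blockSum {n k : ℕ} (f : Fin n → Fin k) (a b : ℕ) (x : Fin (a + n + b)) :
    Fin (a + k + b) :=
  if h₁ : (x : ℕ) < a then ⟨(x : ℕ), by omega⟩
  else if h₂ : (x : ℕ) < a + n then
    ⟨a + (f ⟨(x : ℕ) - a, by omega⟩ : ℕ), by
      have := (f ⟨(x : ℕ) - a, by omega⟩).isLt; omega⟩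
  else ⟨(x : ℕ) - n + k, by have := x.isLt; omega⟩

/-- The middle inclusion `Fin n → Fin (a+n+b)`, `x ↦ a + x` (a convex map). -/
def mid (a n b : ℕ) (x : Fin n) : Fin (a + n + b) :=
  ⟨a + (x : ℕ), by have := x.isLt; omega⟩

/-!
The outer blocks of `id_a + f + id_b` take values below `a` and from `a + k` on, so a value
`a + z` with `z < k` can only be hit from the middle block, where `blockSum` is `f` conjugated by
the two middle inclusions. Hence a cone `(u, v)` factors through `mid a n b` pointwise, and the
factorisation is monotone and unique because `mid a n b` is an order embedding.
-/

theorem mid_strictMono (a n b : ℕ) : StrictMono (mid a n b) := fun x y hxy => by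
  simp only [mid, Fin.lt_def] at hxy ⊢
  omega

theorem blockSum_mid {n k : ℕ} (f : Fin n → Fin k) (a b : ℕ) (x : Fin n) :
    blockSum f a b (mid a n b x) = mid a k b (f x) := by
  simp [blockSum, mid]

theorem exists_mid_eq_of_blockSum_eq_mid {n k : ℕ} {f : Fin n → Fin k} {a b : ℕ}
    {y : Fin (a + n + b)} {z : Fin k} (h : blockSum f a b y = mid a k b z) :
    ∃ x, mid a n b x = y ∧ f x = z := by
  have hy := y.isLt
  have hz := z.isLt
  unfold blockSum mid at h
  split_ifs at h with h₁ h₂ <;> simp only [Fin.mk.injEq] at h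
  · omega
  · exact ⟨⟨y - a, by omega⟩, Fin.ext (by simp only [mid]; omega), Fin.ext (by omega)⟩
  · omega

theorem identity_extension_square_is_pullback_general {n k : ℕ} (f : Fin n → Fin k)
    (a b : ℕ) :
    (blockSum f a b ∘ mid a n b = mid a k b ∘ f) ∧
    (∀ (c : ℕ) (u : Fin c → Fin (a + n + b)) (v : Fin c → Fin k),
      Monotone u → Monotone v → blockSum f a b ∘ u = mid a k b ∘ v →
      ∃! w : Fin c → Fin n, Monotone w ∧ mid a n b ∘ w = u ∧ f ∘ w = v) := by
  refine ⟨funext (blockSum_mid f a b), fun c u v hu _ huv => ?_⟩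
  choose w hwu hwv using fun x => exists_mid_eq_of_blockSum_eq_mid (congrFun huv x)
  have hmid := mid_strictMono a n b
  have hw : Monotone w := fun x y hxy => hmid.le_iff_le.1 (by rw [hwu, hwu]; exact hu hxy)
  refine ⟨w, ⟨hw, funext hwu, funext hwv⟩, ?_⟩
  rintro w' ⟨-, hw'u, -⟩
  funext x
  exact hmid.injective ((congrFun hw'u x).trans (hwu x).symm)

/-- Identity-extension squares in the category of finite ordinals and monotone
maps are pullbacks. -/
theorem identity_extension_square_is_pullback {n k : ℕ} (f : Fin n → Fin k)
    (hf : Monotone f) (a b : ℕ) :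
    (blockSum f a b ∘ mid a n b = mid a k b ∘ f) ∧
    (∀ (c : ℕ) (u : Fin c → Fin (a + n + b)) (v : Fin c → Fin k),
      Monotone u → Monotone v → blockSum f a b ∘ u = mid a k b ∘ v →
      ∃! w : Fin c → Fin n, Monotone w ∧ mid a n b ∘ w = u ∧ f ∘ w = v) :=
  identity_extension_square_is_pullback_general f a b
end

section
/- Let h : Fin n' → Fin k' be any monotone map and let i : Fin k → Fin k' be a convex map (so (i x : ℕ) = a + x for some a with a + k ≤ k'). Then there exist m : ℕ, a convex map j : Fin m → Fin n', and a monotone map f : Fin m → Fin k with i ∘ f = h ∘ j, such that the square is a pullback: for every c : ℕ and all monotone p : Fin c → Fin n' and q : Fin c → Fin k with h ∘ p = i ∘ q, there exists a unique monotone r : Fin c → Fin m with j ∘ r = p and f ∘ r = q. (Convex maps in the category of finite ordinals admit pullbacks along arbitrary maps, and the pulled-back map is again convex.) -/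
/-- A monotone map `j : Fin k → Fin n` is convex (distance-preserving) iff it
is of the form `x ↦ a + x` for some `a` with `a + k ≤ n`. -/
def IsConvexMap {k n : ℕ} (j : Fin k → Fin n) : Prop :=
  ∃ a : ℕ, a + k ≤ n ∧ ∀ x : Fin k, (j x : ℕ) = a + (x : ℕ)

/-!
The pullback of the convex map `i = (· + a)` along a monotone `h` is the preimage
`{y | a ≤ h y < a + k}`. Since `h` is monotone, `{y | h y < t}` is a lower set of `Fin n'`,
hence the initial segment of length `#{y | h y < t}`; so the preimage is the interval
`[#{h < a}, #{h < a + k})`, and the inclusion of an interval is convex.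
-/

open Finset

theorem Fin.mem_iff_val_lt_card_of_isLowerSet {n : ℕ} {s : Finset (Fin n)}
    (hs : IsLowerSet (s : Set (Fin n))) (y : Fin n) : y ∈ s ↔ (y : ℕ) < #s := by
  constructor
  · intro hy
    have hle := card_le_card fun z hz => hs (mem_Iic.mp hz) hy
    rwa [Fin.card_Iic] at hle
  · intro hy
    by_contra hny
    have hle := card_le_card fun z (hz : z ∈ s) =>
      mem_Iio.mpr (lt_of_not_ge fun hyz => hny (hs hyz hz))
    rw [Fin.card_Iio] at hle
    omega

theorem Monotone.lt_iff_val_lt_card_filter {n : ℕ} {α : Type*} [Preorder α] [DecidableLT α]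
    {g : Fin n → α} (hg : Monotone g) (t : α) (y : Fin n) :
    g y < t ↔ (y : ℕ) < #{z | g z < t} := by
  have hs : IsLowerSet (({z | g z < t} : Finset (Fin n)) : Set (Fin n)) := by
    simpa [Set.preimage, Set.Iio] using (isLowerSet_Iio t).preimage hg
  rw [← Fin.mem_iff_val_lt_card_of_isLowerSet hs]
  simp

theorem exists_convex_pullback_of_preimage_eq_Ico {n' k k' a b m : ℕ}
    {h : Fin n' → Fin k'} (hmono : Monotone h) {i : Fin k → Fin k'}
    (hia : ∀ x, (i x : ℕ) = a + x) (hbm : b + m ≤ n')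
    (hpre : ∀ y : Fin n', a ≤ (h y : ℕ) ∧ (h y : ℕ) < a + k ↔ b ≤ (y : ℕ) ∧ (y : ℕ) < b + m) :
    ∃ (j : Fin m → Fin n') (f : Fin m → Fin k),
      IsConvexMap j ∧ Monotone f ∧ i ∘ f = h ∘ j ∧
      ∀ (c : ℕ) (p : Fin c → Fin n') (q : Fin c → Fin k),
        Monotone p → Monotone q → h ∘ p = i ∘ q →
        ∃! r : Fin c → Fin m, Monotone r ∧ j ∘ r = p ∧ f ∘ r = q := by
  let j : Fin m → Fin n' := fun x => ⟨b + x, by omega⟩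
  have hj : ∀ x, a ≤ (h (j x) : ℕ) ∧ (h (j x) : ℕ) < a + k := fun x =>
    (hpre (j x)).mpr ⟨by simp [j], by simp [j]⟩
  let f : Fin m → Fin k := fun x => ⟨h (j x) - a, by have := hj x; omega⟩
  refine ⟨j, f, ⟨b, hbm, fun _ => rfl⟩, ?_, ?_, ?_⟩
  · intro x y hxy
    have := hmono (show j x ≤ j y from Fin.le_def.mpr (by simp [j, Fin.le_def.mp hxy]))
    simp only [f, Fin.le_def] at this ⊢
    omega
  · funext x
    have := hj x
    exact Fin.ext (by simp only [Function.comp_apply, hia, f]; omega)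
  · intro c p q hp _ hpq
    have hhp : ∀ x, (h (p x) : ℕ) = a + q x := fun x => by
      rw [← hia]; exact congrArg Fin.val (congrFun hpq x)
    have hp_mem : ∀ x, b ≤ (p x : ℕ) ∧ (p x : ℕ) < b + m := fun x =>
      (hpre (p x)).mp (by have := hhp x; omega)
    have hjr : ∀ x, j ⟨p x - b, by have := hp_mem x; omega⟩ = p x := fun x =>
      Fin.ext (by have := hp_mem x; simp only [j]; omega)
    refine ⟨fun x => ⟨p x - b, by have := hp_mem x; omega⟩, ⟨?_, funext hjr, ?_⟩, ?_⟩
    · intro x y hxy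
      have := Fin.le_def.mp (hp hxy)
      simp only [Fin.le_def]
      omega
    · funext x
      exact Fin.ext (by simp only [Function.comp_apply, f, hjr, hhp]; omega)
    · rintro r ⟨-, hjr', -⟩
      funext x
      have := congrArg Fin.val (congrFun hjr' x)
      exact Fin.ext (by simp only [Function.comp_apply, j] at this ⊢; omega)

/-- Convex maps in the category of finite ordinals and monotone maps admit
pullbacks along arbitrary maps, and the pulled-back map is again convex. -/
theorem convex_pullback_exists {n' k k' : ℕ} (h : Fin n' → Fin k')
    (hmono : Monotone h) (i : Fin k → Fin k') (hi : IsConvexMap i) :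
    ∃ (m : ℕ) (j : Fin m → Fin n') (f : Fin m → Fin k),
      IsConvexMap j ∧ Monotone f ∧ i ∘ f = h ∘ j ∧
      ∀ (c : ℕ) (p : Fin c → Fin n') (q : Fin c → Fin k),
        Monotone p → Monotone q → h ∘ p = i ∘ q →
        ∃! r : Fin c → Fin m, Monotone r ∧ j ∘ r = p ∧ f ∘ r = q := by
  obtain ⟨a, -, hia⟩ := hi
  have hval : Monotone fun y => (h y : ℕ) := fun _ _ hxy => Fin.le_def.mp (hmono hxy)
  set b := #{y | (h y : ℕ) < a}
  set e := #{y | (h y : ℕ) < a + k}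
  have hbe : b ≤ e := card_le_card fun y => by simp only [mem_filter, mem_univ, true_and]; omega
  have hen : e ≤ n' := (card_le_univ _).trans_eq (Fintype.card_fin n')
  have hpre : ∀ y : Fin n', a ≤ (h y : ℕ) ∧ (h y : ℕ) < a + k ↔
      b ≤ (y : ℕ) ∧ (y : ℕ) < b + (e - b) := fun y => by
    rw [Nat.add_sub_cancel' hbe, ← not_lt, hval.lt_iff_val_lt_card_filter,
      hval.lt_iff_val_lt_card_filter, not_lt]
  exact ⟨e - b, exists_convex_pullback_of_preimage_eq_Ico hmono hia (by omega) hpre⟩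
end

section
/- Let b₁ k b₂ : ℕ and let h : Fin n' → Fin (b₁ + k + b₂) be monotone. Then there exist unique natural numbers a₁, n, a₂ with a₁ + n + a₂ = n', and unique monotone maps g₁ : Fin a₁ → Fin b₁, f : Fin n → Fin k, and g₂ : Fin a₂ → Fin b₂, such that for all x: (h x : ℕ) = g₁ x when (x : ℕ) < a₁; (h x : ℕ) = b₁ + f(x − a₁) when a₁ ≤ x < a₁ + n; and (h x : ℕ) = b₁ + k + g₂(x − a₁ − n) when a₁ + n ≤ x. In other words, every monotone map into a three-block ordinal decomposes uniquely as a block sum g₁ + f + g₂, and the pullback of the middle inclusion Fin k → Fin (b₁+k+b₂) along h is the middle inclusion Fin n → Fin (a₁+n+a₂) together with f. -/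
/-!
Since `h` is monotone, the preimages of the initial segments `[0, b₁)` and `[0, b₁ + k)` are
initial segments `[0, a₁)` and `[0, a₁ + n)` of `Fin n'`, whose lengths are the cardinalities of
the preimages; on each of the three blocks so obtained, `h` restricts to a monotone map into the
matching block of the target. Conversely, in any block decomposition the source blocks are these
preimages, which gives uniqueness, and a map landing in the middle target block lands in the
middle source block, which gives the pullback property.
-/

open Finset

/-- `h` is the ordinal sum `g₁ + f + g₂`. -/
structure IsBlockSum {N b₁ k b₂ a₁ n a₂ : ℕ} (h : Fin N → Fin (b₁ + k + b₂))
    (hsum : a₁ + n + a₂ = N) (g₁ : Fin a₁ → Fin b₁) (f : Fin n → Fin k) (g₂ : Fin a₂ → Fin b₂) :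
    Prop where
  left : ∀ (x : Fin N) (hx : (x : ℕ) < a₁), (h x : ℕ) = (g₁ ⟨(x : ℕ), hx⟩ : ℕ)
  mid : ∀ (x : Fin N) (hx₁ : a₁ ≤ (x : ℕ)) (hx₂ : (x : ℕ) < a₁ + n),
    (h x : ℕ) = b₁ + (f ⟨(x : ℕ) - a₁, Nat.sub_lt_left_of_lt_add hx₁ hx₂⟩ : ℕ)
  right : ∀ (x : Fin N) (hx : a₁ + n ≤ (x : ℕ)),
    (h x : ℕ) = b₁ + k +
      (g₂ ⟨(x : ℕ) - a₁ - n,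
        by rw [Nat.sub_sub]; exact Nat.sub_lt_left_of_lt_add hx (hsum ▸ x.isLt)⟩ : ℕ)

namespace IsBlockSum

variable {N b₁ k b₂ a₁ n a₂ : ℕ} {h : Fin N → Fin (b₁ + k + b₂)} {hsum : a₁ + n + a₂ = N}
  {g₁ : Fin a₁ → Fin b₁} {f : Fin n → Fin k} {g₂ : Fin a₂ → Fin b₂}

theorem lt_left_iff (hd : IsBlockSum h hsum g₁ f g₂) (x : Fin N) :
    (x : ℕ) < a₁ ↔ (h x : ℕ) < b₁ := by
  refine ⟨fun hx => hd.left x hx ▸ (g₁ _).isLt, fun hhx => ?_⟩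
  by_contra! hx
  by_cases hx₂ : (x : ℕ) < a₁ + n
  · have := hd.mid x hx hx₂; omega
  · have := hd.right x (by omega); omega

theorem lt_mid_iff (hd : IsBlockSum h hsum g₁ f g₂) (x : Fin N) :
    (x : ℕ) < a₁ + n ↔ (h x : ℕ) < b₁ + k := by
  constructor
  · intro hx
    by_cases hx₁ : (x : ℕ) < a₁
    · have := hd.left x hx₁; have := (g₁ ⟨x, hx₁⟩).isLt; omega
    · have := hd.mid x (by omega) hx; have := (f ⟨x - a₁, by omega⟩).isLt; omega
  · intro hhx
    by_contra! hx
    have := hd.right x hx; omega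

theorem left_eq_card (hd : IsBlockSum h hsum g₁ f g₂) : a₁ = #{x | (h x : ℕ) < b₁} := by
  rw [← filter_congr fun x _ => hd.lt_left_iff x, Fin.card_filter_val_lt]
  omega

theorem left_add_mid_eq_card (hd : IsBlockSum h hsum g₁ f g₂) :
    a₁ + n = #{x | (h x : ℕ) < b₁ + k} := by
  rw [← filter_congr fun x _ => hd.lt_mid_iff x, Fin.card_filter_val_lt]
  omega

theorem mid_apply (hd : IsBlockSum h hsum g₁ f g₂) (i : Fin n) :
    (h (Fin.cast hsum (Fin.castAdd a₂ (Fin.natAdd a₁ i))) : ℕ) = b₁ + f i := by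
  simpa using hd.mid (Fin.cast hsum (Fin.castAdd a₂ (Fin.natAdd a₁ i))) (by simp) (by simp)

theorem right_apply (hd : IsBlockSum h hsum g₁ f g₂) (i : Fin a₂) :
    (h (Fin.cast hsum (Fin.natAdd (a₁ + n) i)) : ℕ) = b₁ + k + g₂ i := by
  simpa [Nat.sub_sub] using hd.right (Fin.cast hsum (Fin.natAdd (a₁ + n) i)) (by simp)

theorem unique {a₁' n' a₂' : ℕ} {hsum' : a₁' + n' + a₂' = N} {g₁' : Fin a₁' → Fin b₁}
    {f' : Fin n' → Fin k} {g₂' : Fin a₂' → Fin b₂}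
    (hd : IsBlockSum h hsum g₁ f g₂) (hd' : IsBlockSum h hsum' g₁' f' g₂') :
    a₁ = a₁' ∧ n = n' ∧ a₂ = a₂' ∧ HEq g₁ g₁' ∧ HEq f f' ∧ HEq g₂ g₂' := by
  obtain rfl : a₁ = a₁' := hd.left_eq_card.trans hd'.left_eq_card.symm
  obtain rfl : n = n' := by
    have := hd.left_add_mid_eq_card.trans hd'.left_add_mid_eq_card.symm
    omega
  obtain rfl : a₂ = a₂' := by omega
  refine ⟨rfl, rfl, rfl, heq_of_eq ?_, heq_of_eq ?_, heq_of_eq ?_⟩ <;> funext i <;> apply Fin.ext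
  · exact (hd.left ⟨i, by omega⟩ i.isLt).symm.trans (hd'.left _ i.isLt)
  · exact Nat.add_left_cancel ((hd.mid_apply i).symm.trans (hd'.mid_apply i))
  · exact Nat.add_left_cancel ((hd.right_apply i).symm.trans (hd'.right_apply i))

theorem existsUnique_lift {ι : Type*} [Preorder ι] (hd : IsBlockSum h hsum g₁ f g₂)
    {p : ι → Fin N} (hp : Monotone p) {q : ι → Fin k} (hpq : ∀ y, (h (p y) : ℕ) = b₁ + q y) :
    ∃! r : ι → Fin n, Monotone r ∧ (∀ y, (p y : ℕ) = a₁ + r y) ∧ f ∘ r = q := by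
  have hmem (y : ι) : a₁ ≤ p y ∧ (p y : ℕ) < a₁ + n := by
    have := hd.lt_left_iff (p y); have := hd.lt_mid_iff (p y); have := hpq y; have := (q y).isLt
    omega
  refine ⟨fun y => ⟨p y - a₁, by have := hmem y; omega⟩, ⟨fun y z hyz => ?_, fun y => ?_, ?_⟩, ?_⟩
  · exact Nat.sub_le_sub_right (hp hyz) a₁
  · exact (Nat.add_sub_cancel' (hmem y).1).symm
  · funext y; apply Fin.ext
    have := hd.mid (p y) (hmem y).1 (hmem y).2; have := hpq y
    simp only [Function.comp_apply]; omega
  · rintro r ⟨-, hr, -⟩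
    funext y; apply Fin.ext
    show (r y : ℕ) = p y - a₁; have := hr y; omega

end IsBlockSum

theorem Monotone.exists_restrict_block {N : ℕ} {u : Fin N → ℕ} (hu : Monotone u) {a n lo m : ℕ}
    (han : a + n ≤ N)
    (hval : ∀ x : Fin N, a ≤ (x : ℕ) → (x : ℕ) < a + n → lo ≤ u x ∧ u x < lo + m) :
    ∃ g : Fin n → Fin m, Monotone g ∧ ∀ (x : Fin N) (hx₁ : a ≤ (x : ℕ)) (hx₂ : (x : ℕ) < a + n),
      u x = lo + g ⟨x - a, Nat.sub_lt_left_of_lt_add hx₁ hx₂⟩ := by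
  have hval' (i : Fin n) := hval ⟨a + i, by omega⟩ (by simp) (by simp)
  refine ⟨fun i => ⟨u ⟨a + i, by omega⟩ - lo, by have := hval' i; omega⟩, fun i j hij => ?_,
    fun x hx₁ hx₂ => ?_⟩
  · exact Nat.sub_le_sub_right (hu (Fin.mk_le_mk.2 (Nat.add_le_add_left hij a))) lo
  · have hx : (⟨a + (x - a), by omega⟩ : Fin N) = x := Fin.ext (by dsimp only; omega)
    have := hval x hx₁ hx₂
    simp only [hx]
    omega

theorem exists_isBlockSum {N b₁ k b₂ : ℕ} {h : Fin N → Fin (b₁ + k + b₂)} (hmono : Monotone h) :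
    ∃ (a₁ n a₂ : ℕ) (hsum : a₁ + n + a₂ = N) (g₁ : Fin a₁ → Fin b₁) (f : Fin n → Fin k)
      (g₂ : Fin a₂ → Fin b₂),
      (Monotone g₁ ∧ Monotone f ∧ Monotone g₂) ∧ IsBlockSum h hsum g₁ f g₂ := by
  have hu : Monotone fun x => (h x : ℕ) := fun _ _ hxy => hmono hxy
  set A := #{x | (h x : ℕ) < b₁}
  set B := #{x | (h x : ℕ) < b₁ + k}
  have hA (x : Fin N) : (x : ℕ) < A ↔ (h x : ℕ) < b₁ := Tuple.lt_card_lt_iff_apply_lt_of_monotone hu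
  have hB (x : Fin N) : (x : ℕ) < B ↔ (h x : ℕ) < b₁ + k :=
    Tuple.lt_card_lt_iff_apply_lt_of_monotone hu
  have hAB : A ≤ B := card_le_card (monotone_filter_right _ fun x hx => by omega)
  have hBN : B ≤ N := (card_filter_le _ _).trans (card_fin N).le
  obtain ⟨g₁, hg₁, hv₁⟩ := hu.exists_restrict_block (a := 0) (n := A) (lo := 0) (m := b₁) (by omega)
    fun x _ hx => ⟨Nat.zero_le _, by simpa using (hA x).1 (by simpa using hx)⟩
  obtain ⟨f, hf, hv⟩ :=
    hu.exists_restrict_block (a := A) (n := B - A) (lo := b₁) (m := k) (by omega)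
      fun x hx₁ hx₂ => by have := hA x; have := hB x; omega
  obtain ⟨g₂, hg₂, hv₂⟩ := hu.exists_restrict_block (a := A + (B - A)) (n := N - B) (lo := b₁ + k)
    (m := b₂) (by omega) fun x hx₁ _ => by have := hB x; have := (h x).isLt; omega
  refine ⟨A, B - A, N - B, by omega, g₁, f, g₂, ⟨hg₁, hf, hg₂⟩, fun x hx => ?_, hv, fun x hx => ?_⟩
  · simpa using hv₁ x (Nat.zero_le _) (by simpa using hx)
  · simpa [Nat.sub_sub] using hv₂ x hx (by omega)

/-- Every monotone map into a three-block ordinal `Fin (b₁+k+b₂)` decomposes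
uniquely as a block sum `g₁ + f + g₂`, and the pullback of the middle inclusion
`Fin k → Fin (b₁+k+b₂)` along `h` is the middle inclusion `Fin n → Fin (a₁+n+a₂)`
together with `f`. -/
theorem block_decomposition (b₁ k b₂ n' : ℕ) (h : Fin n' → Fin (b₁ + k + b₂))
    (hmono : Monotone h) :
    ∃ (a₁ n a₂ : ℕ) (hsum : a₁ + n + a₂ = n')
      (g₁ : Fin a₁ → Fin b₁) (f : Fin n → Fin k) (g₂ : Fin a₂ → Fin b₂),
      (Monotone g₁ ∧ Monotone f ∧ Monotone g₂) ∧
      (∀ (x : Fin n') (hx : (x : ℕ) < a₁), (h x : ℕ) = (g₁ ⟨(x : ℕ), hx⟩ : ℕ)) ∧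
      (∀ (x : Fin n') (hx₁ : a₁ ≤ (x : ℕ)) (hx₂ : (x : ℕ) < a₁ + n),
        (h x : ℕ) = b₁ + (f ⟨(x : ℕ) - a₁, by omega⟩ : ℕ)) ∧
      (∀ (x : Fin n') (hx : a₁ + n ≤ (x : ℕ)),
        (h x : ℕ) = b₁ + k + (g₂ ⟨(x : ℕ) - a₁ - n, by have := x.isLt; omega⟩ : ℕ)) ∧
      -- uniqueness of the block decomposition:
      (∀ (a₁' n₁ a₂' : ℕ) (hsum' : a₁' + n₁ + a₂' = n')
         (g₁' : Fin a₁' → Fin b₁) (f' : Fin n₁ → Fin k) (g₂' : Fin a₂' → Fin b₂),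
        Monotone g₁' → Monotone f' → Monotone g₂' →
        (∀ (x : Fin n') (hx : (x : ℕ) < a₁'), (h x : ℕ) = (g₁' ⟨(x : ℕ), hx⟩ : ℕ)) →
        (∀ (x : Fin n') (hx₁ : a₁' ≤ (x : ℕ)) (hx₂ : (x : ℕ) < a₁' + n₁),
          (h x : ℕ) = b₁ + (f' ⟨(x : ℕ) - a₁', by omega⟩ : ℕ)) →
        (∀ (x : Fin n') (hx : a₁' + n₁ ≤ (x : ℕ)),
          (h x : ℕ) = b₁ + k + (g₂' ⟨(x : ℕ) - a₁' - n₁, by have := x.isLt; omega⟩ : ℕ)) →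
        a₁' = a₁ ∧ n₁ = n ∧ a₂' = a₂ ∧ HEq g₁' g₁ ∧ HEq f' f ∧ HEq g₂' g₂) ∧
      -- the pullback of the middle inclusion along h is the middle inclusion with f:
      (∀ x : Fin n, (h ⟨a₁ + (x : ℕ), by have := x.isLt; omega⟩ : ℕ) = b₁ + (f x : ℕ)) ∧
      (∀ (c : ℕ) (p : Fin c → Fin n') (q : Fin c → Fin k), Monotone p → Monotone q →
        (∀ y : Fin c, (h (p y) : ℕ) = b₁ + (q y : ℕ)) →
        ∃! r : Fin c → Fin n, Monotone r ∧
          (∀ y : Fin c, (p y : ℕ) = a₁ + (r y : ℕ)) ∧ f ∘ r = q) := by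
  obtain ⟨a₁, n, a₂, hsum, g₁, f, g₂, hblocks, hd⟩ := exists_isBlockSum hmono
  refine ⟨a₁, n, a₂, hsum, g₁, f, g₂, hblocks, hd.left, hd.mid, hd.right, ?_, hd.mid_apply, ?_⟩
  · intro a₁' n₁ a₂' hsum' g₁' f' g₂' _ _ _ hleft hmid hright
    exact IsBlockSum.unique (hsum := hsum') ⟨hleft, hmid, hright⟩ hd
  · intro c p q hp _ hpq
    exact hd.existsUnique_lift hp hpq
end

section
/- Let P be a partial order and n : ℕ. The map sending a monotone function ℓ : P → Fin (n+1) to the chain of lower sets L : Fin n → LowerSet P defined by L j = {p | (ℓ p : ℕ) ≤ (j : ℕ)} is a bijection between monotone maps P → Fin (n+1) and monotone maps Fin n → LowerSet P; its inverse sends a chain L to the map p ↦ the least j with p ∈ L j (and p ↦ n if p ∉ L j for all j). (An (n+1)-layering of a poset is the same as a chain of n lower sets; this is the object part of the equivalence Dec_⊥(C) ≃ N(C^lower).) -/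
/-!
The layer of `p` is read off the chain as the first index at which `p` enters it, so
`ℓ p ≤ j ↔ p ∈ L j` for every `j < n`. Both composites are then the identity: a chain is
determined by its memberships, and a value in `Fin (n + 1)` is determined by which `j < n`
it lies below.
-/

theorem Nat.eq_of_forall_lt_le_iff {a b n : ℕ} (ha : a ≤ n) (hb : b ≤ n)
    (h : ∀ j < n, a ≤ j ↔ b ≤ j) : a = b := by
  rcases lt_trichotomy a b with hab | hab | hab
  · have := (h a (by omega)).1 le_rfl
    omega
  · exact hab
  · have := (h b (by omega)).2 le_rfl
    omega

section Layering

variable {P : Type*} [PartialOrder P] {n : ℕ}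

def chainOfLayering (ℓ : P →o Fin (n + 1)) : Fin n →o LowerSet P where
  toFun j := ⟨{p | (ℓ p : ℕ) ≤ (j : ℕ)},
    fun _ _ hba ha => le_trans (Fin.le_def.mp (ℓ.mono hba)) ha⟩
  monotone' j _ hjk p hp := le_trans (show (ℓ p : ℕ) ≤ (j : ℕ) from hp) hjk

theorem mem_chainOfLayering (ℓ : P →o Fin (n + 1)) (j : Fin n) (p : P) :
    p ∈ chainOfLayering ℓ j ↔ (ℓ p : ℕ) ≤ (j : ℕ) := Iff.rfl

def entryIndices (L : Fin n →o LowerSet P) (p : P) : Set ℕ :=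
  {j | ∃ hj : j < n, p ∈ L ⟨j, hj⟩} ∪ {n}

theorem entryIndices_nonempty (L : Fin n →o LowerSet P) (p : P) :
    (entryIndices L p).Nonempty :=
  ⟨n, Or.inr rfl⟩

theorem sInf_entryIndices_le (L : Fin n →o LowerSet P) (p : P) : sInf (entryIndices L p) ≤ n :=
  Nat.sInf_le (Or.inr rfl)

theorem entryIndices_antitone (L : Fin n →o LowerSet P) {p q : P} (hpq : p ≤ q) :
    entryIndices L q ⊆ entryIndices L p := by
  rintro j (⟨hj, hq⟩ | rfl)
  · exact Or.inl ⟨hj, (L ⟨j, hj⟩).lower hpq hq⟩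
  · exact Or.inr rfl

theorem sInf_entryIndices_le_iff (L : Fin n →o LowerSet P) (j : Fin n) (p : P) :
    sInf (entryIndices L p) ≤ (j : ℕ) ↔ p ∈ L j := by
  refine ⟨fun h => ?_, fun h => Nat.sInf_le (Or.inl ⟨j.2, h⟩)⟩
  rcases Nat.sInf_mem (entryIndices_nonempty L p) with ⟨hlt, hmem⟩ | heq
  · exact L.mono (show (⟨_, hlt⟩ : Fin n) ≤ j from h) hmem
  · have : sInf (entryIndices L p) = n := heq
    omega

noncomputable def layeringOfChain (L : Fin n →o LowerSet P) : P →o Fin (n + 1) where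
  toFun p := ⟨sInf (entryIndices L p), Nat.lt_succ_of_le (sInf_entryIndices_le L p)⟩
  monotone' _ _ hpq :=
    csInf_le_csInf (OrderBot.bddBelow _) (entryIndices_nonempty L _) (entryIndices_antitone L hpq)

theorem val_layeringOfChain (L : Fin n →o LowerSet P) (p : P) :
    (layeringOfChain L p : ℕ) = sInf (entryIndices L p) := rfl

theorem chainOfLayering_layeringOfChain (L : Fin n →o LowerSet P) :
    chainOfLayering (layeringOfChain L) = L := by
  ext j p
  exact sInf_entryIndices_le_iff L j p

theorem layeringOfChain_chainOfLayering (ℓ : P →o Fin (n + 1)) :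
    layeringOfChain (chainOfLayering ℓ) = ℓ := by
  ext p
  refine Nat.eq_of_forall_lt_le_iff (sInf_entryIndices_le _ p) (Nat.lt_succ_iff.mp (ℓ p).2)
    fun j hj => ?_
  exact sInf_entryIndices_le_iff (chainOfLayering ℓ) ⟨j, hj⟩ p

noncomputable def layeringEquivChain : (P →o Fin (n + 1)) ≃ (Fin n →o LowerSet P) where
  toFun := chainOfLayering
  invFun := layeringOfChain
  left_inv := layeringOfChain_chainOfLayering
  right_inv := chainOfLayering_layeringOfChain

end Layering

/-- An `(n+1)`-layering of a poset is the same thing as a chain of `n` lower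
sets: the map sending a monotone `ℓ : P → Fin (n+1)` to the chain
`j ↦ {p | ℓ p ≤ j}` is a bijection, whose inverse sends a chain `L` to the map
taking `p` to the least `j` with `p ∈ L j` (and to `n` if there is no such `j`). -/
theorem layering_equiv_chain_of_lowerSets (P : Type*) [PartialOrder P] (n : ℕ) :
    ∃ e : (P →o Fin (n + 1)) ≃ (Fin n →o LowerSet P),
      (∀ (ℓ : P →o Fin (n + 1)) (j : Fin n) (p : P),
        p ∈ (e ℓ) j ↔ (ℓ p : ℕ) ≤ (j : ℕ)) ∧
      (∀ (L : Fin n →o LowerSet P) (p : P),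
        ((e.symm L) p : ℕ) = sInf ({j : ℕ | ∃ hj : j < n, p ∈ L ⟨j, hj⟩} ∪ {n})) :=
  ⟨layeringEquivChain, mem_chainOfLayering, val_layeringOfChain⟩
end

section
/- Let m n : ℕ. In the category FintypeCat of finite types, the functor from the core (maximal subgroupoid) of the slice category over Fin m ⊕ Fin n to the product of the cores of the slice categories over Fin m and over Fin n, sending an object f : A → Fin m ⊕ Fin n to the pair consisting of its restrictions f⁻¹(Sum.inl-part) → Fin m and f⁻¹(Sum.inr-part) → Fin n (the pullbacks of f along the two coproduct inclusions), is an equivalence of categories. (This is the Segal condition for the simplicial groupoid of layered finite sets: an (m+n)-layering of a finite set is the same as a pair of an m-layering and an n-layering.) -/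
/-!
A layering `A → α ⊕ β` splits `A` into the preimages of the two summands, and a pair of layerings
`B → α`, `C → β` glues to the layering `B ⊕ C → α ⊕ β`. Up to the canonical bijections
`A ≃ A_α ⊕ A_β` and `{x : B ⊕ C // x lies over α} ≃ B` these constructions are mutually inverse,
so they form an equivalence `Over (α ⊕ β) ≌ Over α × Over β` of slice categories of `FintypeCat`.
Taking cores preserves equivalences and commutes with products.
-/

open CategoryTheory

namespace CategoryTheory.Core

variable (C D : Type*) [Category C] [Category D]

-- Both composites are the identity up to eta for `Core` and for pairs, hence `Iso.refl`.
def prodEquiv : Core (C × D) ≌ Core C × Core D :=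
  .mk ((Prod.fst C D).core.prod' (Prod.snd C D).core)
    (functorToCore ((inclusion C).prod (inclusion D))) (Iso.refl _) (Iso.refl _)

end CategoryTheory.Core

universe u

def Equiv.isLeftSumIsRight {α β γ : Type*} (f : γ → α ⊕ β) :
    {c // (f c).isLeft} ⊕ {c // (f c).isRight} ≃ γ :=
  (Equiv.sumCongr (Equiv.refl _) (Equiv.subtypeEquivRight fun _ => Sum.not_isLeft.symm)).trans
    (Equiv.sumCompl _)

namespace FintypeCat

section Over

variable {γ : FintypeCat.{u}} {Y Z : Over γ}

lemma over_w_apply (g : Y ⟶ Z) (a : Y.left) : Z.hom (g.left a) = Y.hom a :=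
  ConcreteCategory.congr_hom (Over.w g) a

lemma over_hom_ext {f g : Y ⟶ Z} (h : ∀ a, f.left a = g.left a) : f = g :=
  Over.OverMorphism.ext (hom_ext _ _ h)

def overIsoMk (e : Y.left ≃ Z.left) (h : ∀ a, Z.hom (e a) = Y.hom a) : Y ≅ Z :=
  Over.isoMk (equivEquivIso e) (hom_ext _ _ h)

end Over

variable {α β : Type u} [Fintype α] [Fintype β]

def overRestrictInl : Over (of (α ⊕ β)) ⥤ Over (of α) where
  obj Y := Over.mk (X := of α)
    (f := (homMk (fun a => (Y.hom a.1).getLeft a.2) : of {a : Y.left // (Y.hom a).isLeft} ⟶ of α))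
  map {Y Z} g := Over.homMk (homMk fun a => ⟨g.left a.1, by rw [over_w_apply]; exact a.2⟩)
    (hom_ext _ _ fun a => by
      show (Z.hom (g.left a.1)).getLeft _ = (Y.hom a.1).getLeft _
      congr 1
      exact over_w_apply g a.1)

def overRestrictInr : Over (of (α ⊕ β)) ⥤ Over (of β) where
  obj Y := Over.mk (X := of β)
    (f := (homMk (fun a => (Y.hom a.1).getRight a.2) : of {a : Y.left // (Y.hom a).isRight} ⟶ of β))
  map {Y Z} g := Over.homMk (homMk fun a => ⟨g.left a.1, by rw [over_w_apply]; exact a.2⟩)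
    (hom_ext _ _ fun a => by
      show (Z.hom (g.left a.1)).getRight _ = (Y.hom a.1).getRight _
      congr 1
      exact over_w_apply g a.1)

def overSum : Over (of α) × Over (of β) ⥤ Over (of (α ⊕ β)) where
  obj P := Over.mk (homMk (Sum.map P.1.hom P.2.hom) : of (P.1.left ⊕ P.2.left) ⟶ of (α ⊕ β))
  map g := Over.homMk (homMk (Sum.map g.1.left g.2.left))
    (hom_ext _ _ <| by
      rintro (u | v)
      · exact congrArg Sum.inl (over_w_apply g.1 u)
      · exact congrArg Sum.inr (over_w_apply g.2 v))
  map_id _ := over_hom_ext <| by rintro (u | v) <;> rfl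
  map_comp _ _ := over_hom_ext <| by rintro (u | v) <;> rfl

def overRestrict : Over (of (α ⊕ β)) ⥤ Over (of α) × Over (of β) :=
  overRestrictInl.prod' overRestrictInr

def overRestrictCompOverSumIso : overRestrict ⋙ overSum ≅ 𝟭 (Over (of (α ⊕ β))) :=
  NatIso.ofComponents
    (fun Y => overIsoMk (Equiv.isLeftSumIsRight Y.hom) <| by
      rintro (⟨a, h⟩ | ⟨a, h⟩)
      · exact (Sum.inl_getLeft _ h).symm
      · exact (Sum.inr_getRight _ h).symm)
    fun g => over_hom_ext <| by rintro (_ | _) <;> rfl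

def overSumCompOverRestrictIso : overSum ⋙ overRestrict ≅ 𝟭 (Over (of α) × Over (of β)) :=
  NatIso.ofComponents
    (fun P => Iso.prod
      (overIsoMk ((Equiv.subtypeEquivRight fun x => by cases x <;> rfl).trans Equiv.sumIsLeft)
        (by rintro ⟨_ | _, ⟨⟩⟩; rfl))
      (overIsoMk ((Equiv.subtypeEquivRight fun x => by cases x <;> rfl).trans Equiv.sumIsRight)
        (by rintro ⟨_ | _, ⟨⟩⟩; rfl)))
    fun g => by
      ext1 <;> refine over_hom_ext ?_
        <;> rintro ⟨_ | _, ⟨⟩⟩ <;> rfl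

def overSumEquiv : Over (of (α ⊕ β)) ≌ Over (of α) × Over (of β) :=
  .mk overRestrict overSum overRestrictCompOverSumIso.symm overSumCompOverRestrictIso

end FintypeCat

/-- The Segal condition for the simplicial groupoid of layered finite sets: the
functor from the core of the slice of `FintypeCat` over `Fin m ⊕ Fin n` to the
product of the cores of the slices over `Fin m` and over `Fin n`, sending a
layering `f : A → Fin m ⊕ Fin n` to the pair of its restrictions (the pullbacks
of `f` along the two coproduct inclusions), is an equivalence of categories. -/
theorem layered_finite_sets_segal_condition (m n : ℕ) :
    ∃ E : Core (Over (FintypeCat.of (Fin m ⊕ Fin n))) ≌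
          Core (Over (FintypeCat.of (Fin m))) × Core (Over (FintypeCat.of (Fin n))),
      ∀ Y : Over (FintypeCat.of (Fin m ⊕ Fin n)),
        (E.functor.obj ⟨Y⟩).1.of = Over.mk (X := FintypeCat.of (Fin m))
            (f := (FintypeCat.homMk (fun a => (Y.hom a.1).getLeft a.2) :
              FintypeCat.of {a : ↥Y.left // (Y.hom a).isLeft} ⟶ FintypeCat.of (Fin m))) ∧
        (E.functor.obj ⟨Y⟩).2.of = Over.mk (X := FintypeCat.of (Fin n))
            (f := (FintypeCat.homMk (fun a => (Y.hom a.1).getRight a.2) :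
              FintypeCat.of {a : ↥Y.left // (Y.hom a).isRight} ⟶ FintypeCat.of (Fin n))) := by
  exact ⟨FintypeCat.overSumEquiv.core.trans (Core.prodEquiv _ _), fun _ => ⟨rfl, rfl⟩⟩
end

section
/- Let f : Fin n → Fin k be monotone and a b : ℕ. Define g : Fin (a+n+b) → Fin (a+k+b) by (g x : ℕ) = x if (x : ℕ) < a, (g x : ℕ) = a + f(x − a) if a ≤ x < a + n, and (g x : ℕ) = x − n + k if a + n ≤ x. Let P' be a partial order and β : P' → Fin (a+k+b) a monotone map. Let P = {p : P' // a ≤ (β p : ℕ) ∧ (β p : ℕ) < a + k} with the induced order, and let α : P → Fin n be a monotone map satisfying a + (f (α p) : ℕ) = (β p : ℕ) for all p : P. Then there exists a unique monotone map γ : P' → Fin (a+n+b) such that g ∘ γ = β and (γ p : ℕ) = a + (α p : ℕ) for all p : P. (This is the strict-pullback property of layered posets that makes the comma projection ℂ ↓ Δ → Δ a iesq sesquicartesian fibration.) -/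
section BlockSum

variable {n k : ℕ} (f : Fin n → Fin k) (a b : ℕ) (x : Fin (a + n + b))

theorem blockSum_val_of_lt (h : (x : ℕ) < a) : (blockSum f a b x : ℕ) = x := by
  simp [blockSum, h]

theorem blockSum_val_of_le (h : a + n ≤ (x : ℕ)) : (blockSum f a b x : ℕ) = x - n + k := by
  simp [blockSum, show ¬ (x : ℕ) < a by omega, show ¬ (x : ℕ) < a + n by omega]

theorem blockSum_val_of_mem (h₁ : a ≤ (x : ℕ)) (h₂ : (x : ℕ) < a + n) :
    (blockSum f a b x : ℕ) = a + f ⟨x - a, by omega⟩ := by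
  simp [blockSum, show ¬ (x : ℕ) < a by omega, h₂]

theorem val_eq_blockSum_val_of_lt (h : (blockSum f a b x : ℕ) < a) :
    (x : ℕ) = blockSum f a b x := by
  rcases lt_or_ge (x : ℕ) a with hx₁ | hx₁
  · rw [blockSum_val_of_lt f a b x hx₁]
  rcases lt_or_ge (x : ℕ) (a + n) with hx₂ | hx₂
  · rw [blockSum_val_of_mem f a b x hx₁ hx₂] at h
    omega
  · rw [blockSum_val_of_le f a b x hx₂] at h
    omega

theorem val_eq_blockSum_val_of_le (h : a + k ≤ (blockSum f a b x : ℕ)) :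
    (x : ℕ) = blockSum f a b x - k + n := by
  rcases lt_or_ge (x : ℕ) a with hx₁ | hx₁
  · rw [blockSum_val_of_lt f a b x hx₁] at h ⊢
    omega
  rcases lt_or_ge (x : ℕ) (a + n) with hx₂ | hx₂
  · have := (f ⟨x - a, by omega⟩).isLt
    rw [blockSum_val_of_mem f a b x hx₁ hx₂] at h
    omega
  · rw [blockSum_val_of_le f a b x hx₂]
    omega

end BlockSum

section BlockLift

variable {n k a b : ℕ} {P : Type*} (β : P → Fin (a + k + b))
  (α : {p : P // a ≤ (β p : ℕ) ∧ (β p : ℕ) < a + k} → Fin n)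

def blockLift (p : P) : Fin (a + n + b) :=
  if h₁ : (β p : ℕ) < a then ⟨β p, by omega⟩
  else if h₂ : (β p : ℕ) < a + k then
    ⟨a + α ⟨p, by omega, h₂⟩, by have := (α ⟨p, by omega, h₂⟩).isLt; omega⟩
  else ⟨β p - k + n, by have := (β p).isLt; omega⟩

variable {β} {p : P}

theorem blockLift_val_of_lt (h : (β p : ℕ) < a) : (blockLift β α p : ℕ) = β p := by
  simp [blockLift, h]

theorem blockLift_val_of_le (h : a + k ≤ (β p : ℕ)) :
    (blockLift β α p : ℕ) = β p - k + n := by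
  simp [blockLift, show ¬ (β p : ℕ) < a by omega, show ¬ (β p : ℕ) < a + k by omega]

theorem blockLift_val_of_mem (q : {p : P // a ≤ (β p : ℕ) ∧ (β p : ℕ) < a + k}) :
    (blockLift β α q : ℕ) = a + α q := by
  simp [blockLift, show ¬ (β q.1 : ℕ) < a by omega, q.2.2]

theorem blockLift_val_lt_of_lt (h : (β p : ℕ) < a + k) : (blockLift β α p : ℕ) < a + n := by
  rcases lt_or_ge (β p : ℕ) a with h₁ | h₁
  · rw [blockLift_val_of_lt α h₁]
    omega
  · rw [blockLift_val_of_mem α ⟨p, h₁, h⟩]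
    exact Nat.add_lt_add_left (α _).isLt a

theorem monotone_blockLift [Preorder P] (hβ : Monotone β) (hα : Monotone α) :
    Monotone (blockLift β α) := by
  intro p q hpq
  have hβpq : (β p : ℕ) ≤ β q := hβ hpq
  rw [Fin.le_def]
  rcases lt_or_ge (β q : ℕ) a with hq₁ | hq₁
  · rw [blockLift_val_of_lt α hq₁, blockLift_val_of_lt α (hβpq.trans_lt hq₁)]
    exact hβpq
  rcases lt_or_ge (β q : ℕ) (a + k) with hq₂ | hq₂
  · rw [blockLift_val_of_mem α ⟨q, hq₁, hq₂⟩]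
    rcases lt_or_ge (β p : ℕ) a with hp₁ | hp₁
    · rw [blockLift_val_of_lt α hp₁]
      omega
    · rw [blockLift_val_of_mem α ⟨p, hp₁, by omega⟩]
      exact Nat.add_le_add_left (@hα ⟨p, hp₁, by omega⟩ ⟨q, hq₁, hq₂⟩ hpq) a
  · rw [blockLift_val_of_le α hq₂]
    rcases lt_or_ge (β p : ℕ) (a + k) with hp | hp
    · have := blockLift_val_lt_of_lt α hp
      omega
    · rw [blockLift_val_of_le α hp]
      omega

theorem blockSum_comp_blockLift (f : Fin n → Fin k)
    (hcompat : ∀ q : {p : P // a ≤ (β p : ℕ) ∧ (β p : ℕ) < a + k}, a + (f (α q) : ℕ) = β q) :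
    blockSum f a b ∘ blockLift β α = β := by
  funext p
  apply Fin.ext
  rcases lt_or_ge (β p : ℕ) a with h₁ | h₁
  · have hp := blockLift_val_of_lt α h₁
    rw [Function.comp_apply, blockSum_val_of_lt f a b _ (by omega), hp]
  rcases lt_or_ge (β p : ℕ) (a + k) with h₂ | h₂
  · have hp : (blockLift β α p : ℕ) = a + α ⟨p, h₁, h₂⟩ := blockLift_val_of_mem α ⟨p, h₁, h₂⟩
    rw [Function.comp_apply,
      blockSum_val_of_mem f a b _ (by omega) (blockLift_val_lt_of_lt α h₂),
      ← hcompat ⟨p, h₁, h₂⟩]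
    congr 3
    simp only [hp, Nat.add_sub_cancel_left]
  · have hp := blockLift_val_of_le α h₂
    rw [Function.comp_apply, blockSum_val_of_le f a b _ (by omega), hp]
    omega

theorem eq_blockLift_of_blockSum_comp (f : Fin n → Fin k) {γ : P → Fin (a + n + b)}
    (hγ : blockSum f a b ∘ γ = β)
    (hmid : ∀ q : {p : P // a ≤ (β p : ℕ) ∧ (β p : ℕ) < a + k}, (γ q : ℕ) = a + α q) :
    γ = blockLift β α := by
  funext p
  have hp : blockSum f a b (γ p) = β p := congrFun hγ p
  apply Fin.ext
  rcases lt_or_ge (β p : ℕ) a with h₁ | h₁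
  · rw [blockLift_val_of_lt α h₁, val_eq_blockSum_val_of_lt f a b _ (by rwa [hp]), hp]
  rcases lt_or_ge (β p : ℕ) (a + k) with h₂ | h₂
  · exact (hmid ⟨p, h₁, h₂⟩).trans (blockLift_val_of_mem α ⟨p, h₁, h₂⟩).symm
  · rw [blockLift_val_of_le α h₂, val_eq_blockSum_val_of_le f a b _ (by rwa [hp]), hp]

end BlockLift

theorem layered_poset_strict_pullback_general {n k : ℕ} (f : Fin n → Fin k)
    (a b : ℕ)
    {P' : Type*} [PartialOrder P'] (β : P' → Fin (a + k + b)) (hβ : Monotone β)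
    (α : {p : P' // a ≤ (β p : ℕ) ∧ (β p : ℕ) < a + k} → Fin n) (hα : Monotone α)
    (hcompat : ∀ p : {p : P' // a ≤ (β p : ℕ) ∧ (β p : ℕ) < a + k},
      a + (f (α p) : ℕ) = (β p.1 : ℕ)) :
    ∃! γ : P' → Fin (a + n + b), Monotone γ ∧ blockSum f a b ∘ γ = β ∧
      ∀ p : {p : P' // a ≤ (β p : ℕ) ∧ (β p : ℕ) < a + k},
        (γ p.1 : ℕ) = a + (α p : ℕ) :=
  ⟨blockLift β α,
    ⟨monotone_blockLift α hβ hα, blockSum_comp_blockLift α f hcompat, blockLift_val_of_mem α⟩,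
    fun _ ⟨_, hγ, hmid⟩ => eq_blockLift_of_blockSum_comp α f hγ hmid⟩

/-- The strict-pullback property of layered posets making the comma projection
`ℂ ↓ Δ → Δ` a iesq sesquicartesian fibration: given a `(a+k+b)`-layering `β` of
a poset `P'` and a refinement `α` of its middle part by an `n`-layering
compatible with `f`, there is a unique monotone `(a+n+b)`-layering `γ` of `P'`
with `(id_a + f + id_b) ∘ γ = β` restricting to `α` on the middle part. -/
theorem layered_poset_strict_pullback {n k : ℕ} (f : Fin n → Fin k)
    (hf : Monotone f) (a b : ℕ)
    {P' : Type*} [PartialOrder P'] (β : P' → Fin (a + k + b)) (hβ : Monotone β)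
    (α : {p : P' // a ≤ (β p : ℕ) ∧ (β p : ℕ) < a + k} → Fin n) (hα : Monotone α)
    (hcompat : ∀ p : {p : P' // a ≤ (β p : ℕ) ∧ (β p : ℕ) < a + k},
      a + (f (α p) : ℕ) = (β p.1 : ℕ)) :
    ∃! γ : P' → Fin (a + n + b), Monotone γ ∧ blockSum f a b ∘ γ = β ∧
      ∀ p : {p : P' // a ≤ (β p : ℕ) ∧ (β p : ℕ) < a + k},
        (γ p.1 : ℕ) = a + (α p : ℕ) :=
  layered_poset_strict_pullback_general f a b β hβ α hα hcompat
end
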